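/- arXiv:1209.6497 — 3 statements merged into one kernel-verified Lean document; each statement's English description precedes it below -/
import Mathlib

section
/- In the locally bounded semimartingale market, with ℙ_F defined by dℙ_F/dℙ = e^{αF}/𝔼[e^{αF}], the dual value process I^F_t := essinf_{Q ∈ M_f} [I_t(Q|ℙ) − α𝔼^Q[F|F_t]] satisfies I^F_t = essinf_{Q ∈ M_f} I_t(Q|ℙ_F) − log 𝔼[e^{αF}|F_t] for all 0 ≤ t ≤ T; in particular the dual minimiser Q^F minimises the conditional relative entropy process I_t(Q|ℙ_F) over Q ∈ M_f. -/
open MeasureTheory ProbabilityTheory Filter Real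
open scoped ENNReal Topology

noncomputable section

/-- `X` is a local martingale: there is a localising sequence of stopping times
increasing to `+∞` such that each stopped process is a martingale. -/
def IsLocalMartingale {Ω : Type*} {mΩ : MeasurableSpace Ω} (ℱ : Filtration ℝ mΩ)
    (Q : Measure Ω) (X : ℝ → Ω → ℝ) : Prop :=
  ∃ τ : ℕ → Ω → ℝ, (∀ n, IsStoppingTime ℱ (fun ω => ((τ n ω : ℝ) : WithTop ℝ))) ∧ (∀ ω, Monotone fun n => τ n ω) ∧
    (∀ᵐ ω ∂Q, Tendsto (fun n => τ n ω) atTop atTop) ∧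
    ∀ n, Martingale (fun t ω => X (min t (τ n ω)) ω) ℱ Q

/-- The density process `Z^{Q,μ}_t = 𝔼^μ[dQ/dμ | F_t]` of `Q` with respect to `μ`. -/
def densProc {Ω : Type*} {mΩ : MeasurableSpace Ω} (ℱ : Filtration ℝ mΩ)
    (μ Q : Measure Ω) (t : ℝ) : Ω → ℝ :=
  MeasureTheory.condExp (ℱ t) μ (fun ω => (Q.rnDeriv μ ω).toReal)

/-- The conditional relative entropy process
`I_t(Q|μ) = 𝔼^Q[log (Z^{Q,μ}_T / Z^{Q,μ}_t) | F_t]` between `Q` and `μ`. -/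
def condRelEntropy {Ω : Type*} {mΩ : MeasurableSpace Ω} (ℱ : Filtration ℝ mΩ)
    (μ Q : Measure Ω) (T t : ℝ) : Ω → ℝ :=
  MeasureTheory.condExp (ℱ t) Q
    (fun ω => Real.log (densProc ℱ μ Q T ω / densProc ℱ μ Q t ω))

/-- The set `M_f` of equivalent local martingale measures for `S` with finite
relative entropy with respect to `P`. -/
def Mf {Ω : Type*} {mΩ : MeasurableSpace Ω} (ℱ : Filtration ℝ mΩ) (P : Measure Ω)
    {d : ℕ} (S : ℝ → Ω → Fin d → ℝ) : Set (Measure Ω) :=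
  {Q | IsProbabilityMeasure Q ∧ Q ≪ P ∧ P ≪ Q ∧
    (∀ i, IsLocalMartingale ℱ Q fun t ω => S t ω i) ∧
    Integrable (fun ω => Real.log ((Q.rnDeriv P ω).toReal)) Q}

/-- `Y` is (a version of) the essential supremum under `P` of the family `X i`. -/
def IsEssSupFam {Ω : Type*} {_ : MeasurableSpace Ω} {ι : Sort*} (P : Measure Ω)
    (X : ι → Ω → ℝ) (Y : Ω → ℝ) : Prop :=
  (∀ i, X i ≤ᵐ[P] Y) ∧ ∀ Z : Ω → ℝ, (∀ i, X i ≤ᵐ[P] Z) → Y ≤ᵐ[P] Z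

/-- `Y` is (a version of) the essential infimum under `P` of the family `X i`. -/
def IsEssInfFam {Ω : Type*} {_ : MeasurableSpace Ω} {ι : Sort*} (P : Measure Ω)
    (X : ι → Ω → ℝ) (Y : Ω → ℝ) : Prop :=
  (∀ i, Y ≤ᵐ[P] X i) ∧ ∀ Z : Ω → ℝ, (∀ i, Z ≤ᵐ[P] X i) → Z ≤ᵐ[P] Y

/-!
The reference measure `P_F` is the exponential tilt of `P` by `αF`, so its density process with
respect to `P` is `D_t = 𝔼[e^{αF} | F_t] / 𝔼[e^{αF}]`. Conditional densities multiply along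
`Q ≪ P_F ≪ P` (each is the density of the measures trimmed to `F_t`), so for every `Q ∈ M_f`
`log (Z^{Q,P_F}_T / Z^{Q,P_F}_t) = log (Z^{Q,P}_T / Z^{Q,P}_t) - αF + log 𝔼[e^{αF} | F_t]`,
and conditioning under `Q` gives `I_t(Q|P_F) = I_t(Q|P) - α𝔼^Q[F|F_t] + log 𝔼[e^{αF}|F_t]`.
The last term does not depend on `Q`, so it passes through both essential infima, and the
minimiser of one family minimises the other. Every term is `Q`-integrable: the logarithms of
conditional densities by the data processing inequality for relative entropy, and `F` by the
Young inequality `xy ≤ x log x - x + e^y` applied to `x = dQ/dP`.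
-/

open InformationTheory

lemma mul_le_klFun_add_exp {x : ℝ} (hx : 0 ≤ x) (y : ℝ) : x * y ≤ klFun x + exp y - 1 := by
  rw [klFun_apply]
  rcases hx.eq_or_lt with rfl | hx
  · simpa using (exp_pos y).le
  · have h := add_one_le_exp (y - log x)
    rw [exp_sub, exp_log hx, le_div_iff₀ hx] at h
    linarith

section

variable {Ω : Type*} {m mΩ : MeasurableSpace Ω} {μ ρ Q : Measure Ω}

lemma condExp_rnDeriv_pos [IsFiniteMeasure Q] [IsFiniteMeasure μ] (hm : m ≤ mΩ) (hQμ : Q ≪ μ) :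
    ∀ᵐ x ∂Q, 0 < μ[fun y => (Q.rnDeriv μ y).toReal | m] x := by
  have hQμ' := hQμ.trim hm
  refine ae_of_ae_trim hm ?_
  filter_upwards [hQμ'.ae_le (toReal_rnDeriv_trim hm hQμ), Measure.rnDeriv_pos hQμ',
    hQμ'.ae_le (Measure.rnDeriv_lt_top (Q.trim hm) (μ.trim hm))] with x hx hpos hfin
  rw [← hx]
  exact ENNReal.toReal_pos hpos.ne' hfin.ne

lemma integrable_log_condExp_rnDeriv [IsFiniteMeasure Q] [IsFiniteMeasure μ] (hm : m ≤ mΩ)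
    (hQμ : Q ≪ μ) (hllr : Integrable (llr Q μ) Q) :
    Integrable (fun x => log (μ[fun y => (Q.rnDeriv μ y).toReal | m] x)) Q := by
  have htrim : Integrable (llr (Q.trim hm) (μ.trim hm)) (Q.trim hm) := by
    simp_rw [trim_eq_map hm]
    exact integrable_llr_map hQμ (measurable_id'' hm) hllr
  refine integrable_of_integrable_trim hm ((integrable_congr ?_).mp htrim)
  filter_upwards [(hQμ.trim hm).ae_le (toReal_rnDeriv_trim hm hQμ)] with x hx
  rw [llr, hx]

lemma condExp_rnDeriv_mul_condExp_rnDeriv [IsFiniteMeasure Q] [IsFiniteMeasure ρ]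
    [IsFiniteMeasure μ] (hm : m ≤ mΩ) (hQρ : Q ≪ ρ) (hρμ : ρ ≪ μ) :
    (fun x => ρ[fun y => (Q.rnDeriv ρ y).toReal | m] x * μ[fun y => (ρ.rnDeriv μ y).toReal | m] x)
      =ᵐ[ρ] μ[fun y => (Q.rnDeriv μ y).toReal | m] := by
  have hρμ' := hρμ.trim hm
  refine ae_of_ae_trim hm ?_
  filter_upwards [toReal_rnDeriv_trim hm hQρ, hρμ'.ae_le (toReal_rnDeriv_trim hm hρμ),
    hρμ'.ae_le (toReal_rnDeriv_trim hm (hQρ.trans hρμ)),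
    hρμ'.ae_le (Measure.rnDeriv_mul_rnDeriv (hQρ.trim hm))] with x hQρx hρμx hQμx hchain
  rw [← hQρx, ← hρμx, ← hQμx, ← hchain, Pi.mul_apply, ENNReal.toReal_mul]

lemma log_condExp_rnDeriv_ae_eq_add [IsFiniteMeasure Q] [IsFiniteMeasure ρ] [IsFiniteMeasure μ]
    (hm : m ≤ mΩ) (hQρ : Q ≪ ρ) (hρμ : ρ ≪ μ) :
    ∀ᵐ x ∂Q, log (μ[fun y => (Q.rnDeriv μ y).toReal | m] x)
      = log (ρ[fun y => (Q.rnDeriv ρ y).toReal | m] x)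
        + log (μ[fun y => (ρ.rnDeriv μ y).toReal | m] x) := by
  filter_upwards [hQρ.ae_le (condExp_rnDeriv_mul_condExp_rnDeriv hm hQρ hρμ),
    condExp_rnDeriv_pos hm hQρ, condExp_rnDeriv_pos hm (hQρ.trans hρμ)] with x hchain hQρx hQμx
  rw [← hchain] at hQμx ⊢
  rw [log_mul hQρx.ne' (pos_of_mul_pos_right hQμx hQρx.le).ne']

lemma integrable_of_integrable_llr_of_exp_abs [IsFiniteMeasure Q] [IsFiniteMeasure μ] (hQμ : Q ≪ μ)
    (hllr : Integrable (llr Q μ) Q) {f : Ω → ℝ} (hf : AEStronglyMeasurable f μ) {ε : ℝ}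
    (hε : 0 < ε) (hexp : Integrable (fun x => exp (ε * |f x|)) μ) : Integrable f Q := by
  rw [← integrable_rnDeriv_smul_iff hQμ]
  refine Integrable.mono' ((((integrable_klFun_rnDeriv_iff hQμ).mpr hllr).add hexp).const_mul ε⁻¹)
    ((Measure.measurable_rnDeriv Q μ).ennreal_toReal.aestronglyMeasurable.smul hf)
    (ae_of_all _ fun x => ?_)
  have hZ : 0 ≤ (Q.rnDeriv μ x).toReal := ENNReal.toReal_nonneg
  have h := mul_le_klFun_add_exp hZ (ε * |f x|)
  rw [smul_eq_mul, norm_mul, Real.norm_of_nonneg hZ, Real.norm_eq_abs, Pi.add_apply,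
    ← div_eq_inv_mul, le_div_iff₀ hε]
  nlinarith

lemma condRelEntropy_change_reference_measure (ℱ : Filtration ℝ mΩ) (T t : ℝ)
    [IsFiniteMeasure Q] [IsFiniteMeasure ρ] [IsFiniteMeasure μ] (hQρ : Q ≪ ρ) (hρμ : ρ ≪ μ)
    (hllrμ : Integrable (llr Q μ) Q) (hllrρ : Integrable (llr Q ρ) Q) :
    condRelEntropy ℱ ρ Q T t =ᵐ[Q] fun x => condRelEntropy ℱ μ Q T t x
      - Q[fun y => log (densProc ℱ μ ρ T y) | ℱ t] x + log (densProc ℱ μ ρ t x) := by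
  have hlog (s : ℝ) : ∀ᵐ x ∂Q, log (densProc ℱ μ Q s x)
      = log (densProc ℱ ρ Q s x) + log (densProc ℱ μ ρ s x) :=
    log_condExp_rnDeriv_ae_eq_add (ℱ.le s) hQρ hρμ
  have hlogZ (s : ℝ) : Integrable (fun x => log (densProc ℱ μ Q s x)) Q :=
    integrable_log_condExp_rnDeriv (ℱ.le s) (hQρ.trans hρμ) hllrμ
  have hlogZ' (s : ℝ) : Integrable (fun x => log (densProc ℱ ρ Q s x)) Q :=
    integrable_log_condExp_rnDeriv (ℱ.le s) hQρ hllrρ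
  have hlogD (s : ℝ) : Integrable (fun x => log (densProc ℱ μ ρ s x)) Q :=
    ((hlogZ s).sub (hlogZ' s)).congr <| (hlog s).mono fun x hx => by
      simp only [Pi.sub_apply, hx]; ring
  have hlog_div (ν : Measure Ω) [IsFiniteMeasure ν] (hQν : Q ≪ ν) :
      ∀ᵐ x ∂Q, log (densProc ℱ ν Q T x / densProc ℱ ν Q t x)
        = log (densProc ℱ ν Q T x) - log (densProc ℱ ν Q t x) := by
    filter_upwards [condExp_rnDeriv_pos (ℱ.le T) hQν, condExp_rnDeriv_pos (ℱ.le t) hQν]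
      with x hT ht
    exact log_div hT.ne' ht.ne'
  have hX : Integrable (fun x => log (densProc ℱ μ Q T x / densProc ℱ μ Q t x)) Q :=
    ((hlogZ T).sub (hlogZ t)).congr <| (hlog_div μ (hQρ.trans hρμ)).mono fun x hx => hx.symm
  have hsplit : (fun x => log (densProc ℱ ρ Q T x / densProc ℱ ρ Q t x)) =ᵐ[Q]
      (fun x => log (densProc ℱ μ Q T x / densProc ℱ μ Q t x))
        - (fun x => log (densProc ℱ μ ρ T x)) + fun x => log (densProc ℱ μ ρ t x) := by
    filter_upwards [hlog T, hlog t, hlog_div ρ hQρ, hlog_div μ (hQρ.trans hρμ)]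
      with x hT ht hdivρ hdivμ
    simp only [Pi.add_apply, Pi.sub_apply, hdivρ, hdivμ, hT, ht]
    ring
  have hD_meas : StronglyMeasurable[ℱ t] fun x => log (densProc ℱ μ ρ t x) :=
    (stronglyMeasurable_condExp.measurable.log).stronglyMeasurable
  filter_upwards [condExp_congr_ae (m := ℱ t) hsplit,
    condExp_add (m := ℱ t) (hX.sub (hlogD T)) (hlogD t),
    condExp_sub (m := ℱ t) hX (hlogD T)] with x hcongr hadd hsub
  rw [condRelEntropy, hcongr, hadd, Pi.add_apply, hsub,
    condExp_of_stronglyMeasurable (ℱ.le t) hD_meas (hlogD t)]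
  rfl

lemma condRelEntropy_tilted_right (ℱ : Filtration ℝ mΩ) {T : ℝ} (hFT : ℱ T = mΩ) (t : ℝ)
    [IsFiniteMeasure Q] [IsFiniteMeasure μ] (hQμ : Q ≪ μ) (hllr : Integrable (llr Q μ) Q)
    {g : Ω → ℝ} (hgQ : Integrable g Q) (hgμ : Integrable (fun x => exp (g x)) μ) :
    condRelEntropy ℱ (μ.tilted g) Q T t =ᵐ[Q] fun x => condRelEntropy ℱ μ Q T t x
      - Q[g | ℱ t] x + log (μ[fun y => exp (g y) | ℱ t] x) := by
  set c := ∫ x, exp (g x) ∂μ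
  have hρμ : μ.tilted g ≪ μ := tilted_absolutelyContinuous μ g
  have hQρ : Q ≪ μ.tilted g := hQμ.trans (absolutelyContinuous_tilted hgμ)
  have hdens : (fun x => ((μ.tilted g).rnDeriv μ x).toReal) =ᵐ[μ] fun x => c⁻¹ * exp (g x) := by
    have hc : 0 ≤ c := integral_nonneg fun _ => (exp_pos _).le
    filter_upwards [rnDeriv_tilted_left_self (aemeasurable_of_aemeasurable_exp hgμ.1.aemeasurable)]
      with x hx
    rw [hx, ENNReal.toReal_ofReal (div_nonneg (exp_pos _).le hc), div_eq_inv_mul]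
  have hDT : ∀ᵐ x ∂Q, log (densProc ℱ μ (μ.tilted g) T x) = g x - log c := by
    have htop : densProc ℱ μ (μ.tilted g) T = fun x => ((μ.tilted g).rnDeriv μ x).toReal := by
      rw [densProc, hFT]
      exact condExp_of_stronglyMeasurable le_rfl
        (Measure.measurable_rnDeriv _ _).ennreal_toReal.stronglyMeasurable
        Measure.integrable_toReal_rnDeriv
    rw [htop]
    exact hQμ.ae_le (log_rnDeriv_tilted_left_self hgμ)
  have hDt : ∀ᵐ x ∂Q, log (densProc ℱ μ (μ.tilted g) t x)
      = log (μ[fun y => exp (g y) | ℱ t] x) - log c := by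
    have hcond : densProc ℱ μ (μ.tilted g) t =ᵐ[μ] fun x => c⁻¹ * μ[fun y => exp (g y) | ℱ t] x :=
      (condExp_congr_ae hdens).trans (condExp_smul c⁻¹ (fun y => exp (g y)) (ℱ t))
    have hpos : ∀ᵐ x ∂Q, 0 < densProc ℱ μ (μ.tilted g) t x :=
      hQρ.ae_le (condExp_rnDeriv_pos (ℱ.le t) hρμ)
    filter_upwards [hQμ.ae_le hcond, hpos] with x hx hpos
    rw [hx] at hpos ⊢
    rw [log_mul (left_ne_zero_of_mul hpos.ne') (right_ne_zero_of_mul hpos.ne'), log_inv]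
    ring
  have hcondDT : Q[fun y => log (densProc ℱ μ (μ.tilted g) T y) | ℱ t]
      =ᵐ[Q] fun x => Q[g | ℱ t] x - log c := by
    refine (condExp_congr_ae hDT).trans ?_
    filter_upwards [condExp_sub (m := ℱ t) hgQ (integrable_const (log c))] with x hx
    rw [← Pi.sub_def, hx, Pi.sub_apply, condExp_const (ℱ.le t)]
  filter_upwards [condRelEntropy_change_reference_measure ℱ T t hQρ hρμ hllr
    (integrable_llr_tilted_right hQμ hgQ hllr hgμ), hcondDT, hDt] with x hx hDTx hDtx
  rw [hx, hDTx, hDtx]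
  ring

lemma IsEssInfFam.ae_eq_sub_of_ae_eq_add {ι : Sort*} {X X' : ι → Ω → ℝ} {Y Y' h : Ω → ℝ}
    (hY : IsEssInfFam μ X Y) (hY' : IsEssInfFam μ X' Y')
    (hX : ∀ i, X' i =ᵐ[μ] fun ω => X i ω + h ω) :
    Y =ᵐ[μ] fun ω => Y' ω - h ω := by
  have hle : (fun ω => Y ω + h ω) ≤ᵐ[μ] Y' := hY'.2 _ fun i => by
    filter_upwards [hY.1 i, hX i] with ω hYX hXX'
    rw [hXX']
    linarith
  have hge : (fun ω => Y' ω - h ω) ≤ᵐ[μ] Y := hY.2 _ fun i => by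
    filter_upwards [hY'.1 i, hX i] with ω hYX hXX'
    rw [hXX'] at hYX
    linarith
  filter_upwards [hle, hge] with ω hle hge
  linarith

end

theorem dual_value_process_change_of_measure_general
    {Ω : Type*} {mΩ : MeasurableSpace Ω} (P : Measure Ω) [IsProbabilityMeasure P]
    (T : ℝ)
    (ℱ : Filtration ℝ mΩ) (hFT : ℱ T = mΩ)
    {d : ℕ} (S : ℝ → Ω → Fin d → ℝ)
    (α : ℝ) (hα : 0 < α)
    (F : Ω → ℝ) (hFmeas : Measurable F)
    (hFexp : ∃ ε > 0, Integrable (fun ω => Real.exp ((α + ε) * F ω)) P ∧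
      Integrable (fun ω => Real.exp (-ε * F ω)) P)
    (PF : Measure Ω)
    (hPF : PF = P.withDensity (fun ω =>
      ENNReal.ofReal (Real.exp (α * F ω) / ∫ ω', Real.exp (α * F ω') ∂P)))
    -- `IF t` : the dual value process, the essential infimum of `I_t(Q|P) - α𝔼^Q[F|F_t]`
    (IF : ℝ → Ω → ℝ)
    (hIF : ∀ t ∈ Set.Icc (0:ℝ) T, IsEssInfFam P
      (fun Q : {Q : Measure Ω // Q ∈ Mf ℱ P S} => fun ω =>
        condRelEntropy ℱ P Q.1 T t ω - α * MeasureTheory.condExp (ℱ t) Q.1 F ω)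
      (IF t))
    -- `J t` : the essential infimum of the entropies `I_t(Q|P_F)`
    (J : ℝ → Ω → ℝ)
    (hJ : ∀ t ∈ Set.Icc (0:ℝ) T, IsEssInfFam P
      (fun Q : {Q : Measure Ω // Q ∈ Mf ℱ P S} => condRelEntropy ℱ PF Q.1 T t)
      (J t))
    -- `QF` : the dual minimiser
    (QF : Measure Ω) (hQFmem : QF ∈ Mf ℱ P S)
    (hQFopt : ∀ t ∈ Set.Icc (0:ℝ) T,
      (fun ω => condRelEntropy ℱ P QF T t ω - α * MeasureTheory.condExp (ℱ t) QF F ω)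
        =ᵐ[P] IF t) :
    (∀ t ∈ Set.Icc (0:ℝ) T,
      IF t =ᵐ[P] fun ω => J t ω
        - Real.log (MeasureTheory.condExp (ℱ t) P (fun ω' => Real.exp (α * F ω')) ω)) ∧
    (∀ t ∈ Set.Icc (0:ℝ) T, condRelEntropy ℱ PF QF T t =ᵐ[P] J t) := by
  obtain ⟨ε, hε, hexp_pos, hexp_neg⟩ := hFexp
  have hexp_αF : Integrable (fun ω => exp (α * F ω)) P :=
    integrable_exp_mul_of_le_of_le hexp_neg hexp_pos (by linarith) (by linarith)
  have hexp_εF : Integrable (fun ω => exp (ε * F ω)) P :=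
    integrable_exp_mul_of_le_of_le hexp_neg hexp_pos (by linarith) (by linarith)
  have hentropy : ∀ Q ∈ Mf ℱ P S, ∀ t, condRelEntropy ℱ PF Q T t =ᵐ[P] fun ω =>
      (condRelEntropy ℱ P Q T t ω - α * Q[F | ℱ t] ω)
        + log (P[fun ω' => exp (α * F ω') | ℱ t] ω) := by
    rintro Q ⟨hQ, hQP, hPQ, -, hllr⟩ t
    have hFQ : Integrable F Q := integrable_of_integrable_llr_of_exp_abs hQP hllr
      hFmeas.aestronglyMeasurable hε (integrable_exp_mul_abs hexp_εF hexp_neg)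
    rw [show PF = P.tilted fun ω => α * F ω from hPF]
    refine hPQ.ae_le ?_
    filter_upwards [condRelEntropy_tilted_right ℱ hFT t hQP hllr (hFQ.const_mul α) hexp_αF,
      condExp_smul (μ := Q) α F (ℱ t)] with ω hω hsmul
    rw [hω, show (fun x => α * F x) = α • F from rfl, hsmul]
    rfl
  have hvalue (t : ℝ) (ht : t ∈ Set.Icc 0 T) : IF t =ᵐ[P] fun ω => J t ω
      - log (P[fun ω' => exp (α * F ω') | ℱ t] ω) :=
    IsEssInfFam.ae_eq_sub_of_ae_eq_add (hIF t ht) (hJ t ht) fun Q => hentropy Q.1 Q.2 t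
  refine ⟨hvalue, fun t ht => ?_⟩
  filter_upwards [hentropy QF hQFmem t, hQFopt t ht, hvalue t ht] with ω hω hopt hval
  rw [hω, hopt, hval]
  ring

/-- With `P_F` defined by `dP_F/dP = e^{αF}/𝔼[e^{αF}]`, the dual
value process `I^F_t = essinf_{Q∈M_f}[I_t(Q|P) - α𝔼^Q[F|F_t]]` satisfies
`I^F_t = essinf_{Q∈M_f} I_t(Q|P_F) - log 𝔼[e^{αF}|F_t]`; in particular the dual
minimiser `Q^F` minimises the conditional relative entropy process `I_t(Q|P_F)`. -/
theorem dual_value_process_change_of_measure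
    {Ω : Type*} {mΩ : MeasurableSpace Ω} (P : Measure Ω) [IsProbabilityMeasure P]
    (T : ℝ) (hT : 0 < T)
    (ℱ : Filtration ℝ mΩ) (hF0 : ℱ 0 = ⊥) (hFT : ℱ T = mΩ)
    {d : ℕ} (S : ℝ → Ω → Fin d → ℝ) (hSadapted : Adapted ℱ S)
    (hSpos : ∀ t ω i, 0 < S t ω i)
    (hMf : (Mf ℱ P S).Nonempty)
    (α : ℝ) (hα : 0 < α)
    (F : Ω → ℝ) (hFmeas : Measurable F)
    (hFexp : ∃ ε > 0, Integrable (fun ω => Real.exp ((α + ε) * F ω)) P ∧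
      Integrable (fun ω => Real.exp (-ε * F ω)) P)
    (PF : Measure Ω)
    (hPF : PF = P.withDensity (fun ω =>
      ENNReal.ofReal (Real.exp (α * F ω) / ∫ ω', Real.exp (α * F ω') ∂P)))
    -- `IF t` : the dual value process, the essential infimum of `I_t(Q|P) - α𝔼^Q[F|F_t]`
    (IF : ℝ → Ω → ℝ)
    (hIF : ∀ t ∈ Set.Icc (0:ℝ) T, IsEssInfFam P
      (fun Q : {Q : Measure Ω // Q ∈ Mf ℱ P S} => fun ω =>
        condRelEntropy ℱ P Q.1 T t ω - α * MeasureTheory.condExp (ℱ t) Q.1 F ω)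
      (IF t))
    -- `J t` : the essential infimum of the entropies `I_t(Q|P_F)`
    (J : ℝ → Ω → ℝ)
    (hJ : ∀ t ∈ Set.Icc (0:ℝ) T, IsEssInfFam P
      (fun Q : {Q : Measure Ω // Q ∈ Mf ℱ P S} => condRelEntropy ℱ PF Q.1 T t)
      (J t))
    -- `QF` : the dual minimiser
    (QF : Measure Ω) (hQFmem : QF ∈ Mf ℱ P S)
    (hQFopt : ∀ t ∈ Set.Icc (0:ℝ) T,
      (fun ω => condRelEntropy ℱ P QF T t ω - α * MeasureTheory.condExp (ℱ t) QF F ω)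
        =ᵐ[P] IF t) :
    (∀ t ∈ Set.Icc (0:ℝ) T,
      IF t =ᵐ[P] fun ω => J t ω
        - Real.log (MeasureTheory.condExp (ℱ t) P (fun ω' => Real.exp (α * F ω')) ω)) ∧
    (∀ t ∈ Set.Icc (0:ℝ) T, condRelEntropy ℱ PF QF T t =ᵐ[P] J t) :=
  dual_value_process_change_of_measure_general P T ℱ hFT S α hα F hFmeas hFexp PF hPF IF hIF J hJ QF
    hQFmem hQFopt
end
end

section
/- (Dynamic Grandits–Rheinländer representation.) The density process Z^{Q^F} of the dual minimiser Q^F of I^F_t = essinf_{Q∈M_f}[I_t(Q|ℙ) − α𝔼^Q[F|F_t]] satisfies, for every t ∈ [0,T], Z^{Q^F}_T / Z^{Q^F}_t = exp[ I_t(Q^F|ℙ) − α( 𝔼^{Q^F}[F|F_t] + ∫_t^T θ^F_u · dS_u − F ) ], where θ^F ∈ Θ is the optimal trading strategy in the primal exponential utility maximisation problem with the claim F. -/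
open MeasureTheory ProbabilityTheory Filter Real
open scoped ENNReal Topology

noncomputable section

/-!
Because `ℱ T` is the whole σ-algebra, `Z_T = dQ^F/dP`, and since `P_F` is `P` tilted by `αF`,
Property 4.3 says `log Z_T = C + α (F - (θ^F·S)_T)` for a constant `C`. The gains are a
`Q^F`-martingale, so conditioning gives `𝔼^{Q^F}[log Z_T | F_t] = C + α (𝔼^{Q^F}[F | F_t] - (θ^F·S)_t)`.
On the other hand `I_t = 𝔼^{Q^F}[log Z_T | F_t] - log Z_t`; this split is legitimate because
`log Z_t` is the log-likelihood ratio of the restrictions to `F_t`, which is `Q^F`-integrable by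
the data processing inequality. Eliminating `C` leaves `log (Z_T / Z_t)` in the exponent.
-/

open InformationTheory

section SubSigmaAlgebra

variable {Ω : Type*} {m m0 : MeasurableSpace Ω} {μ ν : Measure Ω}
  [IsFiniteMeasure μ] [IsFiniteMeasure ν]

/-- `ν[dμ/dν | m]` is a version of the density of `μ.trim hm` with respect to `ν.trim hm`. -/
lemma condExp_toReal_rnDeriv_pos (hm : m ≤ m0) (hμν : μ ≪ ν) :
    ∀ᵐ x ∂μ, 0 < ν[fun x ↦ (μ.rnDeriv ν x).toReal | m] x := by
  refine ae_of_ae_trim hm ?_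
  filter_upwards [(hμν.trim hm).ae_le (toReal_rnDeriv_trim hm hμν),
    Measure.rnDeriv_pos (hμν.trim hm),
    (hμν.trim hm).ae_le (Measure.rnDeriv_lt_top (μ.trim hm) (ν.trim hm))]
    with x hx h_pos h_lt_top
  rw [← hx]
  exact ENNReal.toReal_pos h_pos.ne' h_lt_top.ne

/-- Data processing: finite relative entropy survives restriction to `m`. -/
lemma integrable_log_condExp_toReal_rnDeriv (hm : m ≤ m0) (hμν : μ ≪ ν)
    (h_int : Integrable (llr μ ν) μ) :
    Integrable (fun x ↦ Real.log (ν[fun x ↦ (μ.rnDeriv ν x).toReal | m] x)) μ := by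
  have h := integrable_llr_map hμν (measurable_id'' hm) h_int
  rw [← trim_eq_map hm, ← trim_eq_map hm] at h
  refine integrable_of_integrable_trim hm ((integrable_congr ?_).mp h)
  filter_upwards [(hμν.trim hm).ae_le (toReal_rnDeriv_trim hm hμν)] with x hx
  rw [llr, hx]

end SubSigmaAlgebra

lemma llr_ae_eq_of_toReal_rnDeriv_tilted {Ω : Type*} {mΩ : MeasurableSpace Ω}
    {μ ν : Measure Ω} [SigmaFinite μ] [SigmaFinite ν] {f g : Ω → ℝ} {c : ℝ} (hc : 0 < c)
    (hμν : μ ≪ ν) (hf : Integrable (fun x ↦ Real.exp (f x)) ν)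
    (h : (fun x ↦ (μ.rnDeriv (ν.tilted f) x).toReal) =ᵐ[ν] fun x ↦ c * Real.exp (g x)) :
    llr μ ν =ᵐ[μ] fun x ↦ Real.log c - Real.log (∫ x, Real.exp (f x) ∂ν) + (f x + g x) := by
  filter_upwards [llr_tilted_right hμν hf, hμν.ae_le h] with x h_tilt hx
  rw [llr, hx, Real.log_mul hc.ne' (Real.exp_ne_zero _), Real.log_exp] at h_tilt
  linarith

lemma condExp_ae_eq_const_add_sub_of_martingale {Ω ι : Type*} {mΩ : MeasurableSpace Ω}
    [Preorder ι] {ℱ : Filtration ι mΩ} {Q : Measure Ω} [IsFiniteMeasure Q] {M : ι → Ω → ℝ}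
    {X Y : Ω → ℝ} {C : ℝ} {s T : ι} (hM : Martingale M ℱ Q) (hsT : s ≤ T)
    (hX_int : Integrable X Q) (hX : X =ᵐ[Q] fun ω ↦ C + (Y ω - M T ω)) :
    Q[X | ℱ s] =ᵐ[Q] fun ω ↦ C + (Q[Y | ℱ s] ω - M s ω) := by
  have hX' : X =ᵐ[Q] (fun _ ↦ C) + (Y - M T) := hX
  have hY_int : Integrable Y Q := by
    refine ((hX_int.sub (integrable_const C)).add (hM.integrable T)).congr ?_
    filter_upwards [hX'] with ω h
    simp only [Pi.add_apply, Pi.sub_apply, h]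
    ring
  refine (condExp_congr_ae hX').trans ?_
  refine (condExp_add (integrable_const C) (hY_int.sub (hM.integrable T)) _).trans ?_
  rw [condExp_const (ℱ.le s)]
  filter_upwards [condExp_sub hY_int (hM.integrable T) (ℱ s), hM.condExp_ae_eq hsT]
    with ω h_sub h_mart
  simp only [Pi.add_apply, h_sub, Pi.sub_apply, h_mart]

section DensityProcess

variable {Ω : Type*} {mΩ : MeasurableSpace Ω} {ℱ : Filtration ℝ mΩ} {P Q : Measure Ω}
  [IsFiniteMeasure P] [IsFiniteMeasure Q]

lemma densProc_eq_toReal_rnDeriv {T : ℝ} (hFT : ℱ T = mΩ) :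
    densProc ℱ P Q T = fun ω ↦ (Q.rnDeriv P ω).toReal := by
  refine condExp_of_stronglyMeasurable (ℱ.le T) ?_ Measure.integrable_toReal_rnDeriv
  rw [hFT]
  fun_prop

lemma condRelEntropy_ae_eq_condExp_llr_sub {T : ℝ} (hFT : ℱ T = mΩ) (t : ℝ) (hQP : Q ≪ P)
    (h_int : Integrable (llr Q P) Q) :
    condRelEntropy ℱ P Q T t
      =ᵐ[Q] Q[llr Q P | ℱ t] - fun ω ↦ Real.log (densProc ℱ P Q t ω) := by
  have h_log_int : Integrable (fun ω ↦ Real.log (densProc ℱ P Q t ω)) Q :=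
    integrable_log_condExp_toReal_rnDeriv (ℱ.le t) hQP h_int
  have h_log_meas : StronglyMeasurable[ℱ t] fun ω ↦ Real.log (densProc ℱ P Q t ω) :=
    stronglyMeasurable_condExp.measurable.log.stronglyMeasurable
  have h_split : (fun ω ↦ Real.log (densProc ℱ P Q T ω / densProc ℱ P Q t ω))
      =ᵐ[Q] llr Q P - fun ω ↦ Real.log (densProc ℱ P Q t ω) := by
    filter_upwards [Measure.rnDeriv_pos hQP, hQP.ae_le (Measure.rnDeriv_lt_top Q P),
      condExp_toReal_rnDeriv_pos (ℱ.le t) hQP] with ω h_pos h_lt_top hZ_pos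
    rw [densProc_eq_toReal_rnDeriv hFT]
    exact Real.log_div (ENNReal.toReal_pos h_pos.ne' h_lt_top.ne).ne' hZ_pos.ne'
  rw [condRelEntropy]
  refine (condExp_congr_ae h_split).trans ((condExp_sub h_int h_log_int _).trans ?_)
  rw [condExp_of_stronglyMeasurable (ℱ.le t) h_log_meas h_log_int]

end DensityProcess

theorem dynamic_grandits_rheinlander_representation_general
    {Ω : Type*} {mΩ : MeasurableSpace Ω} (P : Measure Ω) [IsProbabilityMeasure P]
    (T : ℝ)
    (ℱ : Filtration ℝ mΩ) (hFT : ℱ T = mΩ)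
    {d : ℕ} (S : ℝ → Ω → Fin d → ℝ)
    (α : ℝ) (hα : 0 < α)
    (F : Ω → ℝ)
    (hFexp : ∃ ε > 0, Integrable (fun ω => Real.exp ((α + ε) * F ω)) P ∧
      Integrable (fun ω => Real.exp (-ε * F ω)) P)
    (PF : Measure Ω)
    (hPF : PF = P.withDensity (fun ω =>
      ENNReal.ofReal (Real.exp (α * F ω) / ∫ ω', Real.exp (α * F ω') ∂P)))
    -- the set `Θ` of admissible strategies, encoded through their gains processes
    (Θ : Type*) (gains : Θ → ℝ → Ω → ℝ)
    (hgainsmart : ∀ θ, ∀ Q ∈ Mf ℱ P S, Martingale (gains θ) ℱ Q)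
    -- `θF` : the optimal strategy in the primal problem (maximality of conditional
    -- expected exponential utility over all strategies)
    (θF : Θ)
    -- `QF` : the dual minimiser
    (QF : Measure Ω) (hQFmem : QF ∈ Mf ℱ P S)
    -- Property 4.3 (Grandits–Rheinländer / Kabanov–Stricker), taken as given
    (hGR : ∃ c : ℝ, 0 < c ∧
      (fun ω => (QF.rnDeriv PF ω).toReal)
        =ᵐ[P] fun ω => c * Real.exp (-α * gains θF T ω)) :
    ∀ t ∈ Set.Icc (0:ℝ) T,
      (fun ω => densProc ℱ P QF T ω / densProc ℱ P QF t ω)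
        =ᵐ[P] fun ω => Real.exp (condRelEntropy ℱ P QF T t ω
          - α * (MeasureTheory.condExp (ℱ t) QF F ω
              + (gains θF T ω - gains θF t ω) - F ω)) := by
  rintro t ⟨-, htT⟩
  have hM : Martingale (α • gains θF) ℱ QF := (hgainsmart θF QF hQFmem).smul α
  obtain ⟨hQF, hQP, hPQ, -, h_entropy : Integrable (llr QF P) QF⟩ := hQFmem
  obtain ⟨c, hc, hGR⟩ := hGR
  obtain ⟨ε, hε, h_exp_int, -⟩ := hFexp
  have h_exp_int : Integrable (fun ω ↦ Real.exp (α * F ω)) P :=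
    integrable_exp_mul_of_le_of_le (by simp) h_exp_int hα.le (by linarith)
  set C := Real.log c - Real.log (∫ ω, Real.exp (α * F ω) ∂P)
  have h_llr : llr QF P =ᵐ[QF] fun ω ↦ C + ((α • F) ω - (α • gains θF) T ω) := by
    rw [show PF = P.tilted fun ω ↦ α * F ω from hPF] at hGR
    filter_upwards [llr_ae_eq_of_toReal_rnDeriv_tilted hc hQP h_exp_int hGR] with ω h
    simp only [h, C, Pi.smul_apply, smul_eq_mul]
    ring
  have h_cond := condExp_ae_eq_const_add_sub_of_martingale hM htT h_entropy h_llr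
  refine hPQ.ae_le ?_
  filter_upwards [condRelEntropy_ae_eq_condExp_llr_sub hFT t hQP h_entropy, h_cond, h_llr,
    condExp_smul α F (ℱ t), exp_llr_of_ac QF P hQP, condExp_toReal_rnDeriv_pos (ℱ.le t) hQP]
    with ω h_I h_cond h_llr h_smul h_exp_llr hZ_pos
  have h_exponent : condRelEntropy ℱ P QF T t ω
      - α * (QF[F | ℱ t] ω + (gains θF T ω - gains θF t ω) - F ω)
      = llr QF P ω - Real.log (densProc ℱ P QF t ω) := by
    simp only [Pi.sub_apply, Pi.smul_apply, smul_eq_mul] at h_I h_cond h_llr h_smul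
    rw [h_I, h_cond, h_llr, h_smul]
    ring
  rw [h_exponent, Real.exp_sub, h_exp_llr, Real.exp_log (x := densProc ℱ P QF t ω) hZ_pos,
    densProc_eq_toReal_rnDeriv hFT]

/-- Corollary 4.4: dynamic Grandits–Rheinländer representation.
The density process of the dual minimiser `Q^F` satisfies, for every `t ∈ [0,T]`,
`Z^{Q^F}_T / Z^{Q^F}_t = exp[ I_t(Q^F|P) - α(𝔼^{Q^F}[F|F_t] + ∫_t^T θ^F·dS - F) ]`,
where `θ^F ∈ Θ` is the primal optimiser. Strategies `θ ∈ Θ` are encoded via their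
gains processes `gains θ = θ·S`, which are `Q`-martingales for every `Q ∈ M_f`,
and the Grandits–Rheinländer/Kabanov–Stricker representation
`dQ^F/dP_F = c_F exp(-α(θ^F·S)_T)` is taken as given. -/
theorem dynamic_grandits_rheinlander_representation
    {Ω : Type*} {mΩ : MeasurableSpace Ω} (P : Measure Ω) [IsProbabilityMeasure P]
    (T : ℝ) (hT : 0 < T)
    (ℱ : Filtration ℝ mΩ) (hF0 : ℱ 0 = ⊥) (hFT : ℱ T = mΩ)
    {d : ℕ} (S : ℝ → Ω → Fin d → ℝ) (hSadapted : Adapted ℱ S)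
    (hSpos : ∀ t ω i, 0 < S t ω i)
    (hMf : (Mf ℱ P S).Nonempty)
    (α : ℝ) (hα : 0 < α)
    (F : Ω → ℝ) (hFmeas : Measurable F)
    (hFexp : ∃ ε > 0, Integrable (fun ω => Real.exp ((α + ε) * F ω)) P ∧
      Integrable (fun ω => Real.exp (-ε * F ω)) P)
    (PF : Measure Ω)
    (hPF : PF = P.withDensity (fun ω =>
      ENNReal.ofReal (Real.exp (α * F ω) / ∫ ω', Real.exp (α * F ω') ∂P)))
    -- the set `Θ` of admissible strategies, encoded through their gains processes
    (Θ : Type*) (gains : Θ → ℝ → Ω → ℝ)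
    (hgains0 : ∀ θ ω, gains θ 0 ω = 0)
    (hgainsmart : ∀ θ, ∀ Q ∈ Mf ℱ P S, Martingale (gains θ) ℱ Q)
    -- `θF` : the optimal strategy in the primal problem (maximality of conditional
    -- expected exponential utility over all strategies)
    (θF : Θ)
    (hθFopt : ∀ t ∈ Set.Icc (0:ℝ) T, ∀ θ : Θ,
      MeasureTheory.condExp (ℱ t) P
          (fun ω => -Real.exp (-α * (gains θ T ω - gains θ t ω - F ω)))
        ≤ᵐ[P] MeasureTheory.condExp (ℱ t) P
          (fun ω => -Real.exp (-α * (gains θF T ω - gains θF t ω - F ω))))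
    -- `QF` : the dual minimiser
    (QF : Measure Ω) (hQFmem : QF ∈ Mf ℱ P S)
    (hQFopt : ∀ t ∈ Set.Icc (0:ℝ) T, IsEssInfFam P
      (fun Q : {Q : Measure Ω // Q ∈ Mf ℱ P S} => fun ω =>
        condRelEntropy ℱ P Q.1 T t ω - α * MeasureTheory.condExp (ℱ t) Q.1 F ω)
      (fun ω => condRelEntropy ℱ P QF T t ω - α * MeasureTheory.condExp (ℱ t) QF F ω))
    -- Property 4.3 (Grandits–Rheinländer / Kabanov–Stricker), taken as given
    (hGR : ∃ c : ℝ, 0 < c ∧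
      (fun ω => (QF.rnDeriv PF ω).toReal)
        =ᵐ[P] fun ω => c * Real.exp (-α * gains θF T ω)) :
    ∀ t ∈ Set.Icc (0:ℝ) T,
      (fun ω => densProc ℱ P QF T ω / densProc ℱ P QF t ω)
        =ᵐ[P] fun ω => Real.exp (condRelEntropy ℱ P QF T t ω
          - α * (MeasureTheory.condExp (ℱ t) QF F ω
              + (gains θF T ω - gains θF t ω) - F ω)) :=
  dynamic_grandits_rheinlander_representation_general P T ℱ hFT S α hα F hFexp PF hPF Θ gains
    hgainsmart θF QF hQFmem hGR
end
end

section
/- (Dynamic entropic distance identity.) For every equivalent local martingale measure Q ∈ M_f, the conditional relative entropy processes satisfy I_t(Q|ℙ) − I_t(Q⁰|ℙ) = I_t(Q|Q⁰) for all 0 ≤ t ≤ T, where Q⁰ is the minimal entropy martingale measure. -/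
/-!
Both sides are `Q`-conditional expectations of logarithms of ratios of density processes. The
chain rule `Z^{Q,P} = Z^{Q,Q⁰} Z^{Q⁰,P}` splits `log (Z^{Q,P}_T / Z^{Q,P}_t)` into the
corresponding terms for `(Q, Q⁰)` and `(Q⁰, P)`, and by the Grandits–Rheinländer representation
the latter equals `I_t(Q⁰|P) - α (G_T - G_t)`, whose `Q`-conditional expectation is `I_t(Q⁰|P)`
since `G` is a `Q`-martingale. All terms are `Q`-integrable: restricting to `F_t` does not
increase relative entropy (data processing inequality), and the representation at time `0`
makes `log dQ⁰/dP` an affine function of `G_T - G_0`.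
-/

open MeasureTheory ProbabilityTheory Filter Real
open scoped ENNReal Topology

noncomputable section

section RelativeEntropy

variable {Ω : Type*} {mΩ : MeasurableSpace Ω} {μ ν κ : Measure Ω}

lemma toReal_rnDeriv_pos [SigmaFinite μ] [SigmaFinite ν] (hμν : μ ≪ ν) :
    ∀ᵐ ω ∂μ, 0 < (ν.rnDeriv μ ω).toReal := by
  filter_upwards [Measure.rnDeriv_pos' hμν, Measure.rnDeriv_ne_top ν μ] with ω hpos hfin
  exact ENNReal.toReal_pos hpos.ne' hfin

lemma llr_ae_eq_llr_add_llr [SigmaFinite μ] [SigmaFinite ν] [SigmaFinite κ] (hνκ : ν ≪ κ)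
    (hκν : κ ≪ ν) (hμκ : μ ≪ κ) : llr ν μ =ᵐ[μ] llr ν κ + llr κ μ := by
  filter_upwards [Measure.rnDeriv_mul_rnDeriv (κ := μ) hνκ,
    hμκ.ae_le (toReal_rnDeriv_pos hκν), toReal_rnDeriv_pos hμκ] with ω hmul hνκ_pos hκμ_pos
  simp only [Pi.add_apply, llr_def]
  rw [← hmul, Pi.mul_apply, ENNReal.toReal_mul, Real.log_mul hνκ_pos.ne' hκμ_pos.ne']

lemma integrable_llr_trim [IsFiniteMeasure μ] [IsFiniteMeasure ν] {m : MeasurableSpace Ω}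
    (hm : m ≤ mΩ) (hνμ : ν ≪ μ) (h : Integrable (llr ν μ) ν) :
    Integrable (llr (ν.trim hm) (μ.trim hm)) ν := by
  have h_trim : Integrable (llr (ν.trim hm) (μ.trim hm)) (ν.trim hm) := by
    simp_rw [trim_eq_map hm]
    exact InformationTheory.integrable_llr_map hνμ (measurable_id'' hm) h
  exact integrable_of_integrable_trim hm h_trim

end RelativeEntropy

lemma MeasureTheory.Martingale.condExp_ae_eq_of_ae_eq_sub_increment {Ω ι : Type*}
    {mΩ : MeasurableSpace Ω} [Preorder ι] {ℱ : Filtration ι mΩ} {Q : Measure Ω} [IsFiniteMeasure Q] {G : ι → Ω → ℝ}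
    (hG : Martingale G ℱ Q) {s t : ι} (hst : s ≤ t) {X Y : Ω → ℝ} {α : ℝ}
    (hY : StronglyMeasurable[ℱ s] Y) (hX : Integrable X Q)
    (h : X =ᵐ[Q] fun ω => Y ω - α * (G t ω - G s ω)) :
    Q[X | ℱ s] =ᵐ[Q] Y := by
  have hincr : Integrable (α • (G t - G s)) Q :=
    ((hG.integrable t).sub (hG.integrable s)).smul α
  have hX_eq : X =ᵐ[Q] Y - α • (G t - G s) := h
  have hY_int : Integrable Y Q := (hX.add hincr).congr <| by
    filter_upwards [hX_eq] with ω hω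
    simp [hω]
  filter_upwards [condExp_congr_ae hX_eq, condExp_sub hY_int hincr (ℱ s),
    condExp_smul α (G t - G s) (ℱ s), condExp_sub (hG.integrable t) (hG.integrable s) (ℱ s),
    hG.condExp_ae_eq hst] with ω h₁ h₂ h₃ h₄ h₅
  rw [h₁, h₂, Pi.sub_apply, h₃, Pi.smul_apply, h₄, Pi.sub_apply, h₅,
    condExp_of_stronglyMeasurable (ℱ.le s) hY hY_int,
    condExp_of_stronglyMeasurable (ℱ.le s) (hG.stronglyAdapted s) (hG.integrable s)]
  simp

section DensityProcess

variable {Ω : Type*} {mΩ : MeasurableSpace Ω} {ℱ : Filtration ℝ mΩ} {μ ν κ : Measure Ω}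
  {T t : ℝ}

lemma densProc_of_eq_top [IsFiniteMeasure μ] [IsFiniteMeasure ν] (hT : ℱ T = mΩ) :
    densProc ℱ μ ν T = fun ω => (ν.rnDeriv μ ω).toReal := by
  rw [densProc, hT]
  exact condExp_of_stronglyMeasurable le_rfl (by fun_prop) Measure.integrable_toReal_rnDeriv

lemma densProc_of_eq_bot [IsProbabilityMeasure μ] [IsProbabilityMeasure ν] (hνμ : ν ≪ μ)
    (ht : ℱ t = ⊥) : densProc ℱ μ ν t = 1 := by
  rw [densProc, ht, condExp_bot, Measure.integral_toReal_rnDeriv hνμ, probReal_univ]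
  rfl

lemma densProc_ae_eq_toReal_rnDeriv_trim [IsFiniteMeasure μ] [IsFiniteMeasure ν]
    (hνμ : ν ≪ μ) (t : ℝ) :
    densProc ℱ μ ν t
      =ᵐ[μ] fun ω => ((ν.trim (ℱ.le t)).rnDeriv (μ.trim (ℱ.le t)) ω).toReal :=
  ae_of_ae_trim _ (toReal_rnDeriv_trim (ℱ.le t) hνμ).symm

/-- `condRelEntropy ℱ μ ν T t` is by definition `ν[logDensRatio ℱ μ ν T t | ℱ t]`. -/
def logDensRatio (ℱ : Filtration ℝ mΩ) (μ ν : Measure Ω) (T t : ℝ) : Ω → ℝ :=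
  fun ω => Real.log (densProc ℱ μ ν T ω / densProc ℱ μ ν t ω)

lemma logDensRatio_of_eq_bot [IsProbabilityMeasure μ] [IsProbabilityMeasure ν] (hνμ : ν ≪ μ)
    (hT : ℱ T = mΩ) (ht : ℱ t = ⊥) : logDensRatio ℱ μ ν T t = llr ν μ := by
  ext ω
  simp [logDensRatio, densProc_of_eq_top hT, densProc_of_eq_bot hνμ ht, llr_def]

variable [IsFiniteMeasure μ] [IsFiniteMeasure ν] [IsFiniteMeasure κ]

lemma logDensRatio_ae_eq_llr_sub_llr_trim (hνμ : ν ≪ μ) (hμν : μ ≪ ν) (hT : ℱ T = mΩ) :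
    logDensRatio ℱ μ ν T t =ᵐ[μ] llr ν μ - llr (ν.trim (ℱ.le t)) (μ.trim (ℱ.le t)) := by
  filter_upwards [densProc_ae_eq_toReal_rnDeriv_trim hνμ t, toReal_rnDeriv_pos hμν,
    ae_of_ae_trim _ (toReal_rnDeriv_pos (hμν.trim (ℱ.le t)))] with ω hZt hZT_pos hZt_pos
  rw [logDensRatio, densProc_of_eq_top hT, hZt, Real.log_div hZT_pos.ne' hZt_pos.ne']
  rfl

lemma integrable_logDensRatio (hνμ : ν ≪ μ) (hμν : μ ≪ ν) (hT : ℱ T = mΩ)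
    (h : Integrable (llr ν μ) ν) : Integrable (logDensRatio ℱ μ ν T t) ν :=
  (h.sub (integrable_llr_trim (ℱ.le t) hνμ h)).congr
    (EventuallyEq.symm (hνμ.ae_le (logDensRatio_ae_eq_llr_sub_llr_trim hνμ hμν hT)))

/-- The logarithm of the chain rule `Z^{ν,μ} = Z^{ν,κ} Z^{κ,μ}`, taken at times `T` and `t`. -/
lemma logDensRatio_ae_eq_sub (hνκ : ν ≪ κ) (hκν : κ ≪ ν) (hκμ : κ ≪ μ) (hμκ : μ ≪ κ)
    (hT : ℱ T = mΩ) :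
    logDensRatio ℱ μ κ T t =ᵐ[ν] logDensRatio ℱ μ ν T t - logDensRatio ℱ κ ν T t := by
  have hνμ := hνκ.trans hκμ
  have hμν := hμκ.trans hκν
  have hm := ℱ.le t
  filter_upwards [hνμ.ae_le (logDensRatio_ae_eq_llr_sub_llr_trim hνμ hμν hT),
    hνκ.ae_le (logDensRatio_ae_eq_llr_sub_llr_trim hνκ hκν hT),
    hνμ.ae_le (logDensRatio_ae_eq_llr_sub_llr_trim hκμ hμκ hT),
    hνμ.ae_le (llr_ae_eq_llr_add_llr hνκ hκν hμκ),
    hνμ.ae_le (ae_of_ae_trim hm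
      (llr_ae_eq_llr_add_llr (hνκ.trim hm) (hκν.trim hm) (hμκ.trim hm)))]
    with ω hνμ_eq hνκ_eq hκμ_eq hllr hllr_trim
  simp only [Pi.add_apply, Pi.sub_apply] at hνμ_eq hνκ_eq hκμ_eq hllr hllr_trim ⊢
  rw [hνμ_eq, hνκ_eq, hκμ_eq, hllr, hllr_trim]
  ring

lemma integrable_logDensRatio_of_integrable_llr (hνκ : ν ≪ κ) (hκν : κ ≪ ν) (hκμ : κ ≪ μ)
    (hμκ : μ ≪ κ) (hT : ℱ T = mΩ) (hνμ_int : Integrable (llr ν μ) ν)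
    (hνκ_int : Integrable (llr ν κ) ν) : Integrable (logDensRatio ℱ μ κ T t) ν :=
  ((integrable_logDensRatio (hνκ.trans hκμ) (hμκ.trans hκν) hT hνμ_int).sub
    (integrable_logDensRatio hνκ hκν hT hνκ_int)).congr
    (logDensRatio_ae_eq_sub hνκ hκν hκμ hμκ hT).symm

lemma condRelEntropy_sub_condRelEntropy_ae_eq (hνκ : ν ≪ κ) (hκν : κ ≪ ν) (hκμ : κ ≪ μ)
    (hμκ : μ ≪ κ) (hT : ℱ T = mΩ) (hνμ_int : Integrable (llr ν μ) ν)
    (hνκ_int : Integrable (llr ν κ) ν) :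
    condRelEntropy ℱ μ ν T t - condRelEntropy ℱ κ ν T t
      =ᵐ[ν] ν[logDensRatio ℱ μ κ T t | ℱ t] :=
  ((condExp_congr_ae (logDensRatio_ae_eq_sub hνκ hκν hκμ hμκ hT)).trans
    (condExp_sub (integrable_logDensRatio (hνκ.trans hκμ) (hμκ.trans hκν) hT hνμ_int)
      (integrable_logDensRatio hνκ hκν hT hνκ_int) _)).symm

end DensityProcess

theorem dynamic_entropic_distance_identity_general
    {Ω : Type*} {mΩ : MeasurableSpace Ω} (P : Measure Ω) [IsProbabilityMeasure P]
    (T : ℝ)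
    (ℱ : Filtration ℝ mΩ) (hF0 : ℱ 0 = ⊥) (hFT : ℱ T = mΩ)
    {d : ℕ} (S : ℝ → Ω → Fin d → ℝ)
    (α : ℝ)
    -- `Q0` : the minimal entropy martingale measure
    (Q0 : Measure Ω) (hQ0mem : Q0 ∈ Mf ℱ P S)
    -- the dynamic Grandits–Rheinländer representation of `Q0`, with gains process
    -- `G = θ⁰·S` a `Q`-martingale for every `Q ∈ M_f`
    (G : ℝ → Ω → ℝ) (hGmart : ∀ Q ∈ Mf ℱ P S, Martingale G ℱ Q)
    (hGR : ∀ t ∈ Set.Icc (0:ℝ) T,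
      (fun ω => densProc ℱ P Q0 T ω / densProc ℱ P Q0 t ω)
        =ᵐ[P] fun ω => Real.exp (condRelEntropy ℱ P Q0 T t ω
          - α * (G T ω - G t ω))) :
    ∀ Q ∈ Mf ℱ P S, ∀ t ∈ Set.Icc (0:ℝ) T,
      (fun ω => condRelEntropy ℱ P Q T t ω - condRelEntropy ℱ P Q0 T t ω)
        =ᵐ[P] condRelEntropy ℱ Q0 Q T t := by
  intro Q hQ t ht
  have hG : Martingale G ℱ Q := hGmart Q hQ
  obtain ⟨_, hQP, hPQ, -, hQP_int⟩ := hQ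
  obtain ⟨_, hQ0P, hPQ0, -, -⟩ := hQ0mem
  change Integrable (llr Q P) Q at hQP_int
  have hQQ0 := hQP.trans hPQ0
  have hQ0Q := hQ0P.trans hPQ
  have hGR_log : ∀ s ∈ Set.Icc 0 T, logDensRatio ℱ P Q0 T s
      =ᵐ[Q] fun ω => condRelEntropy ℱ P Q0 T s ω - α * (G T ω - G s ω) := fun s hs =>
    hQP.ae_le <| (hGR s hs).mono fun ω hω => by
      simp only [logDensRatio] at hω ⊢
      rw [hω, Real.log_exp]
  -- at time `0` the representation expresses `log (dQ0/dP)` through the `Q`-integrable `G`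
  have hQ0P_int : Integrable (llr Q0 P) Q := by
    obtain ⟨c, hc⟩ : ∃ c, condRelEntropy ℱ P Q0 T 0 = fun _ => c := by
      rw [condRelEntropy, hF0, condExp_bot]
      exact ⟨_, rfl⟩
    rw [← logDensRatio_of_eq_bot hQ0P hFT hF0]
    refine Integrable.congr ?_ (hGR_log 0 ⟨le_rfl, ht.1.trans ht.2⟩).symm
    rw [hc]
    exact (integrable_const c).sub (((hG.integrable T).sub (hG.integrable 0)).const_mul α)
  have hQQ0_int : Integrable (llr Q Q0) Q := (hQP_int.sub hQ0P_int).congr <| by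
    filter_upwards [hQP.ae_le (llr_ae_eq_llr_add_llr hQQ0 hQ0Q hPQ0)] with ω hω
    rw [Pi.sub_apply, hω, Pi.add_apply, add_sub_cancel_right]
  have hI0 : Q[logDensRatio ℱ P Q0 T t | ℱ t] =ᵐ[Q] condRelEntropy ℱ P Q0 T t :=
    hG.condExp_ae_eq_of_ae_eq_sub_increment ht.2 stronglyMeasurable_condExp
      (integrable_logDensRatio_of_integrable_llr hQQ0 hQ0Q hQ0P hPQ0 hFT hQP_int hQQ0_int)
      (hGR_log t ht)
  filter_upwards [hPQ.ae_le hI0, hPQ.ae_le (condRelEntropy_sub_condRelEntropy_ae_eq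
    hQQ0 hQ0Q hQ0P hPQ0 hFT hQP_int hQQ0_int)] with ω hI0ω hchainω
  rw [Pi.sub_apply, hI0ω] at hchainω
  linarith

/-- Proposition 4.7: dynamic entropic distance identity. For
every `Q ∈ M_f`, `I_t(Q|P) - I_t(Q⁰|P) = I_t(Q|Q⁰)` for all `t ∈ [0,T]`, where
`Q⁰` is the minimal entropy martingale measure, whose density process admits the
dynamic Grandits–Rheinländer representation
`Z^{Q⁰}_T/Z^{Q⁰}_t = exp(I_t(Q⁰|P) - α ∫_t^T θ⁰·dS)` with `θ⁰·S` (encoded as the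
gains process `G`) a `Q`-martingale for every `Q ∈ M_f`. -/
theorem dynamic_entropic_distance_identity
    {Ω : Type*} {mΩ : MeasurableSpace Ω} (P : Measure Ω) [IsProbabilityMeasure P]
    (T : ℝ) (hT : 0 < T)
    (ℱ : Filtration ℝ mΩ) (hF0 : ℱ 0 = ⊥) (hFT : ℱ T = mΩ)
    {d : ℕ} (S : ℝ → Ω → Fin d → ℝ) (hSadapted : Adapted ℱ S)
    (hSpos : ∀ t ω i, 0 < S t ω i)
    (hMf : (Mf ℱ P S).Nonempty)
    (α : ℝ) (hα : 0 < α)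
    -- `Q0` : the minimal entropy martingale measure
    (Q0 : Measure Ω) (hQ0mem : Q0 ∈ Mf ℱ P S)
    (hQ0memm : ∀ Q ∈ Mf ℱ P S,
      ∫ ω, Real.log ((Q0.rnDeriv P ω).toReal) ∂Q0
        ≤ ∫ ω, Real.log ((Q.rnDeriv P ω).toReal) ∂Q)
    -- the dynamic Grandits–Rheinländer representation of `Q0`, with gains process
    -- `G = θ⁰·S` a `Q`-martingale for every `Q ∈ M_f`
    (G : ℝ → Ω → ℝ) (hGmart : ∀ Q ∈ Mf ℱ P S, Martingale G ℱ Q)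
    (hGR : ∀ t ∈ Set.Icc (0:ℝ) T,
      (fun ω => densProc ℱ P Q0 T ω / densProc ℱ P Q0 t ω)
        =ᵐ[P] fun ω => Real.exp (condRelEntropy ℱ P Q0 T t ω
          - α * (G T ω - G t ω))) :
    ∀ Q ∈ Mf ℱ P S, ∀ t ∈ Set.Icc (0:ℝ) T,
      (fun ω => condRelEntropy ℱ P Q T t ω - condRelEntropy ℱ P Q0 T t ω)
        =ᵐ[P] condRelEntropy ℱ Q0 Q T t :=
  dynamic_entropic_distance_identity_general P T ℱ hF0 hFT S α Q0 hQ0mem G hGmart hGR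
end
end
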